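/- The function V(x,y) = 5(2x + y)/(x y (4x² - y² - 16x - 2y)) is an integrating factor of the cubic Kolmogorov system ẋ = -x(2x - 8 - y)(y + 1)/6, ẏ = y(2x - 2 - y)(x - 2)/3 on any open set where x y (4x² - y² - 16x - 2y) ≠ 0, i.e., the divergence of V·(P,Q) vanishes there. -/

import Mathlib

noncomputable def P6 (x y : ℝ) : ℝ := -x * (2 * x - 8 - y) * (y + 1) / 6
noncomputable def Q6 (x y : ℝ) : ℝ := y * (2 * x - 2 - y) * (x - 2) / 3
noncomputable def V6 (x y : ℝ) : ℝ :=
  5 * (2 * x + y) / (x * y * (4 * x ^ 2 - y ^ 2 - 16 * x - 2 * y))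

lemma cubic_hasDerivAt (a b c x : ℝ) :
    HasDerivAt (fun s : ℝ => a * s ^ 3 + b * s ^ 2 + c * s)
      (3 * a * x ^ 2 + 2 * b * x + c) x := by
  have h := (((hasDerivAt_pow 3 x).const_mul a).add
    (((hasDerivAt_pow 2 x).const_mul b).add ((hasDerivAt_id x).const_mul c)))
  have e : (fun s : ℝ => a * s ^ 3 + b * s ^ 2 + c * s)
      = fun s : ℝ => a * s ^ 3 + (b * s ^ 2 + c * id s) := by
    funext s; simp only [id_eq]; ring
  rw [e]
  have e2 : 3 * a * x ^ 2 + 2 * b * x + c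
      = a * ((3 : ℕ) * x ^ (3 - 1)) + (b * ((2 : ℕ) * x ^ (2 - 1)) + c * 1) := by
    push_cast; ring
  rw [e2]
  exact h

/-- V(x,y) = 5(2x+y)/(xy(4x²-y²-16x-2y)) is an integrating factor of the cubic
Kolmogorov system ẋ = -x(2x-8-y)(y+1)/6, ẏ = y(2x-2-y)(x-2)/3 where the
denominator does not vanish. -/
theorem cubic_kolmogorov_integrating_factor (x y : ℝ)
    (h : x * y * (4 * x ^ 2 - y ^ 2 - 16 * x - 2 * y) ≠ 0) :
    deriv (fun s : ℝ => V6 s y * P6 s y) x +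
      deriv (fun t : ℝ => V6 x t * Q6 x t) y = 0 := by
  have hB1x : (4 * y) * x ^ 3 + (-16 * y) * x ^ 2 + (-y ^ 3 - 2 * y ^ 2) * x ≠ 0 := by
    intro h0; apply h; linear_combination h0
  have hB2y : (-x) * y ^ 3 + (-2 * x) * y ^ 2 + (4 * x ^ 3 - 16 * x ^ 2) * y ≠ 0 := by
    intro h0; apply h; linear_combination h0
  have e1 : (fun s : ℝ => V6 s y * P6 s y) =
      fun s : ℝ => ((-10/3 * y - 10/3) * s ^ 3 + (40/3 * y + 40/3) * s ^ 2 +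
        (5/6 * y ^ 3 + 15/2 * y ^ 2 + 20/3 * y) * s) /
        ((4 * y) * s ^ 3 + (-16 * y) * s ^ 2 + (-y ^ 3 - 2 * y ^ 2) * s) := by
    funext s
    simp only [V6, P6]
    ring
  have e2 : (fun t : ℝ => V6 x t * Q6 x t) =
      fun t : ℝ => ((-5/3 * x + 10/3) * t ^ 3 + (-10/3 * x + 20/3) * t ^ 2 +
        (20/3 * x ^ 3 - 20 * x ^ 2 + 40/3 * x) * t) /
        ((-x) * t ^ 3 + (-2 * x) * t ^ 2 + (4 * x ^ 3 - 16 * x ^ 2) * t) := by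
    funext t
    simp only [V6, Q6]
    ring
  have hd1 := ((cubic_hasDerivAt (-10/3 * y - 10/3) (40/3 * y + 40/3)
      (5/6 * y ^ 3 + 15/2 * y ^ 2 + 20/3 * y) x).div
    (cubic_hasDerivAt (4 * y) (-16 * y) (-y ^ 3 - 2 * y ^ 2) x) hB1x).deriv
  have hd2 := ((cubic_hasDerivAt (-5/3 * x + 10/3) (-10/3 * x + 20/3)
      (20/3 * x ^ 3 - 20 * x ^ 2 + 40/3 * x) y).div
    (cubic_hasDerivAt (-x) (-2 * x) (4 * x ^ 3 - 16 * x ^ 2) y) hB2y).deriv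
  simp only [Pi.div_def] at hd1 hd2
  rw [e1, e2, hd1, hd2]
  rw [div_add_div _ _ (pow_ne_zero 2 hB1x) (pow_ne_zero 2 hB2y), div_eq_zero_iff]
  left
  ring
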